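/- arXiv:2501.12005 — 3 statements merged into one kernel-verified Lean document; each statement's English description precedes it below -/
import Mathlib

section
/- Let C ∈ ℝ^{n×K}, π ∈ Δ_K with positive entries, and define L(π) = −∑_{i=1}^n log(∑_j π_j exp(−C_{ij})). Then (1/n) L(π) ≤ OT₁((1/n)1_n, π, C), where OT₁(a, b, C) = min over couplings P with row sums a and column sums b of ⟨C, P⟩ + KL(P | a bᵀ). -/
open Real

/-- Pointwise Gibbs inequality: for `0 ≤ p` and `0 < r`, `p - r ≤ p * log (p / r)`. -/
lemma gibbs_pointwise {p r : ℝ} (hp : 0 ≤ p) (hr : 0 < r) :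
    p - r ≤ p * Real.log (p / r) := by
  rcases eq_or_lt_of_le hp with h | h
  · simp [← h, hr.le]
  · have hx : 0 < p / r := div_pos h hr
    have h1 := Real.one_sub_inv_le_log_of_pos hx
    have h2 : p * (1 - (p / r)⁻¹) ≤ p * Real.log (p / r) :=
      mul_le_mul_of_nonneg_left h1 hp
    have h3 : p * (1 - (p / r)⁻¹) = p - r := by
      field_simp
    linarith

/-- Per-row inequality: relative entropy against normalized weights bounds `-a log S`. -/
lemma row_ineq {K : ℕ} (a : ℝ) (ha : 0 < a) (q : Fin K → ℝ) (hq : ∀ j, 0 < q j)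
    (P : Fin K → ℝ) (hP : ∀ j, 0 ≤ P j) (hPs : ∑ j, P j = a) :
    a * (-Real.log (∑ j, q j)) ≤ ∑ j, P j * Real.log (P j / (a * q j)) := by
  have hne : (Finset.univ : Finset (Fin K)).Nonempty := by
    by_contra h
    rw [Finset.not_nonempty_iff_eq_empty] at h
    rw [h, Finset.sum_empty] at hPs
    exact ha.ne' hPs.symm
  set S : ℝ := ∑ j, q j with hS
  have hSpos : 0 < S := Finset.sum_pos (fun j _ => hq j) hne
  -- key: ∑ P j * log (P j / (a * q j / S)) ≥ ∑ (P j - a * q j / S) = 0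
  have key : 0 ≤ ∑ j, P j * Real.log (P j / (a * q j / S)) := by
    have h1 : ∀ j ∈ Finset.univ, P j - a * q j / S ≤ P j * Real.log (P j / (a * q j / S)) :=
      fun j _ => gibbs_pointwise (hP j) (div_pos (mul_pos ha (hq j)) hSpos)
    have h2 := Finset.sum_le_sum h1
    have h3 : ∑ j, (P j - a * q j / S) = 0 := by
      rw [Finset.sum_sub_distrib, hPs]
      have : ∑ j, a * q j / S = a * S / S := by
        rw [← Finset.sum_div, ← Finset.mul_sum]
      rw [this, mul_div_assoc, div_self hSpos.ne', mul_one, sub_self]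
    linarith
  -- rewrite each term
  have hterm : ∀ j, P j * Real.log (P j / (a * q j / S)) =
      P j * Real.log (P j / (a * q j)) + P j * Real.log S := by
    intro j
    rcases eq_or_lt_of_le (hP j) with h | h
    · simp [← h]
    · have haq : (0:ℝ) < a * q j := mul_pos ha (hq j)
      rw [div_div_eq_mul_div, Real.log_div (by positivity) haq.ne',
        Real.log_mul h.ne' hSpos.ne', Real.log_div h.ne' haq.ne']
      ring
  have hsum : ∑ j, P j * Real.log (P j / (a * q j / S)) =
      (∑ j, P j * Real.log (P j / (a * q j))) + a * Real.log S := by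
    simp_rw [hterm]
    rw [Finset.sum_add_distrib, ← Finset.sum_mul, hPs]
  rw [hsum] at key
  linarith

/-- Entropic optimal transport (ε = 1) upper bounds the per-sample negative
log-likelihood: for every coupling `P ∈ U((1/n)1_n, w)`, the NLL divided by `n`
is at most the entropic transport cost of `P`. -/
theorem nll_le_eot (n K : ℕ) (hn : 0 < n) (hK : 0 < K)
    (C : Fin n → Fin K → ℝ) (w : Fin K → ℝ)
    (hwpos : ∀ j, 0 < w j) (hwsum : ∑ j, w j = 1) :
    ∀ P : Fin n → Fin K → ℝ,
      (∀ i j, 0 ≤ P i j) → (∀ i, ∑ j, P i j = 1 / n) → (∀ j, ∑ i, P i j = w j) →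
      (1 / n) * (-∑ i, Real.log (∑ j, w j * Real.exp (-C i j))) ≤
        (∑ i, ∑ j, C i j * P i j) +
          ∑ i, ∑ j, P i j * Real.log (P i j / ((1 / n) * w j)) := by
  intro P hPnn hProw _hPcol
  have hnpos : (0:ℝ) < 1 / n := by positivity
  -- combine the two RHS sums into one sum over i
  rw [← Finset.sum_add_distrib]
  have hmain : ∀ i ∈ Finset.univ,
      (1 / (n:ℝ)) * (-Real.log (∑ j, w j * Real.exp (-C i j))) ≤
      (∑ j, C i j * P i j) + ∑ j, P i j * Real.log (P i j / ((1 / n) * w j)) := by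
    intro i _
    have hq : ∀ j, 0 < w j * Real.exp (-C i j) :=
      fun j => mul_pos (hwpos j) (Real.exp_pos _)
    have hrow := row_ineq (1 / (n:ℝ)) hnpos (fun j => w j * Real.exp (-C i j)) hq
      (P i) (hPnn i) (hProw i)
    -- rewrite RHS of hrow into C·P + KL form
    have hterm : ∀ j, P i j * Real.log (P i j / (1 / n * (w j * Real.exp (-C i j)))) =
        C i j * P i j + P i j * Real.log (P i j / ((1 / n) * w j)) := by
      intro j
      rcases eq_or_lt_of_le (hPnn i j) with h | h
      · simp [← h]
      · have h1 : (1:ℝ) / n * (w j * Real.exp (-C i j)) =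
            (1 / n * w j) * Real.exp (-C i j) := by ring
        rw [h1, div_mul_eq_div_div,
          Real.log_div (div_ne_zero h.ne' (mul_pos hnpos (hwpos j)).ne') (Real.exp_ne_zero _), Real.log_exp]
        ring
    calc (1 / (n:ℝ)) * (-Real.log (∑ j, w j * Real.exp (-C i j)))
        ≤ ∑ j, P i j * Real.log (P i j / (1 / n * (w j * Real.exp (-C i j)))) := hrow
      _ = ∑ j, (C i j * P i j + P i j * Real.log (P i j / ((1 / n) * w j))) := by
          simp_rw [hterm]
      _ = (∑ j, C i j * P i j) + ∑ j, P i j * Real.log (P i j / ((1 / n) * w j)) :=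
          Finset.sum_add_distrib
  calc (1 / (n:ℝ)) * (-∑ i, Real.log (∑ j, w j * Real.exp (-C i j)))
      = ∑ i, (1 / (n:ℝ)) * (-Real.log (∑ j, w j * Real.exp (-C i j))) := by
        rw [← Finset.mul_sum, ← Finset.sum_neg_distrib]
    _ ≤ _ := Finset.sum_le_sum hmain
end

section
/- Let C ∈ ℝ^{n×K} and L(π) = −∑_{i=1}^n log(∑_j π_j exp(−C_{ij})). Then min over π ∈ Δ_K of (1/n)L(π) equals min over π ∈ Δ_K of OT₁((1/n)1_n, π, C), where OT₁(a,b,C) = min_{P ∈ U(a,b)} ⟨C,P⟩ + KL(P | a bᵀ). -/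
open Real Finset

/-! For every coupling `P` of `a` and `w`, Gibbs' variational principle applied row by row
gives `-∑ᵢ aᵢ log Zᵢ(w) ≤ ⟨C, P⟩ + KL(P | a wᵀ)`, where `Zᵢ(w) = ∑ⱼ wⱼ exp(-Cᵢⱼ)` is the
likelihood of the `i`-th observation. Conversely, the posterior coupling
`Pᵢⱼ = aᵢ wⱼ exp(-Cᵢⱼ) / Zᵢ(w)`, whose second marginal `w'` is the EM update of `w`, has cost
exactly `-∑ᵢ aᵢ log Zᵢ(w) - KL(w' | w)`. Hence the two sets of values are mutually
cofinal from below and have the same infimum. -/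

theorem mul_log_le_mul_log_div_add {p q c : ℝ} (hp : 0 ≤ p) (hq : 0 ≤ q) (hpq : q = 0 → p = 0)
    (hc : 0 < c) : p * log c ≤ p * log (p / q) + (c * q - p) := by
  rcases hp.eq_or_lt with rfl | hp
  · simpa using mul_nonneg hc.le hq
  have hq : 0 < q := hq.lt_of_ne' fun h => hp.ne' (hpq h)
  have hlog : log c - log (p / q) ≤ c * q / p - 1 := by
    rw [← log_div hc.ne' (div_pos hp hq).ne', div_div_eq_mul_div]
    exact log_le_sub_one_of_pos (by positivity)
  have := mul_le_mul_of_nonneg_left hlog hp.le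
  rw [mul_sub, mul_sub, mul_div_cancel₀ _ hp.ne', mul_one] at this
  linarith

/-- The log-sum inequality. -/
theorem sum_mul_log_div_sum_le {ι : Type*} (s : Finset ι) {p q : ι → ℝ}
    (hp : ∀ i ∈ s, 0 ≤ p i) (hq : ∀ i ∈ s, 0 ≤ q i) (hpq : ∀ i ∈ s, q i = 0 → p i = 0) :
    (∑ i ∈ s, p i) * log ((∑ i ∈ s, p i) / ∑ i ∈ s, q i) ≤ ∑ i ∈ s, p i * log (p i / q i) := by
  rcases (sum_nonneg hp).eq_or_lt with hP | hP
  · have hp0 := (sum_eq_zero_iff_of_nonneg hp).1 hP.symm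
    rw [← hP, zero_mul, sum_eq_zero fun i hi => by rw [hp0 i hi, zero_mul]]
  have hQ : 0 < ∑ i ∈ s, q i := by
    refine (sum_nonneg hq).lt_of_ne fun hQ => hP.ne' ?_
    have hq0 := (sum_eq_zero_iff_of_nonneg hq).1 hQ.symm
    exact sum_eq_zero fun i hi => hpq i hi (hq0 i hi)
  set c := (∑ i ∈ s, p i) / ∑ i ∈ s, q i
  calc (∑ i ∈ s, p i) * log c = ∑ i ∈ s, p i * log c := sum_mul ..
    _ ≤ ∑ i ∈ s, (p i * log (p i / q i) + (c * q i - p i)) :=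
      sum_le_sum fun i hi => mul_log_le_mul_log_div_add (hp i hi) (hq i hi) (hpq i hi)
        (div_pos hP hQ)
    _ = ∑ i ∈ s, p i * log (p i / q i) := by
      rw [sum_add_distrib, sum_sub_distrib, ← mul_sum, div_mul_cancel₀ _ hQ.ne', sub_self,
        add_zero]

theorem sum_mul_log_div_nonneg {κ : Type*} [Fintype κ] {p q : κ → ℝ}
    (hp : p ∈ stdSimplex ℝ κ) (hq : q ∈ stdSimplex ℝ κ) (hpq : ∀ j, q j = 0 → p j = 0) :
    0 ≤ ∑ j, p j * log (p j / q j) := by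
  simpa [hp.2, hq.2] using
    sum_mul_log_div_sum_le univ (fun j _ => hp.1 j) (fun j _ => hq.1 j) (fun j _ => hpq j)

theorem mul_add_mul_log_div_eq {c p b : ℝ} (h : p ≠ 0 → b ≠ 0) :
    c * p + p * log (p / b) = p * log (p / (b * exp (-c))) := by
  rcases eq_or_ne p 0 with rfl | hp
  · simp
  rw [← div_div, div_eq_mul_inv _ (exp _), ← exp_neg, neg_neg,
    log_mul (div_ne_zero hp (h hp)) (exp_ne_zero _), log_exp]
  ring

/-- Gibbs' variational principle, for one row of a coupling. -/
theorem neg_mul_log_sum_mul_exp_le {κ : Type*} [Fintype κ] (c w p : κ → ℝ)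
    (hw : ∀ j, 0 ≤ w j) (hp : ∀ j, 0 ≤ p j) (hpw : ∀ j, w j = 0 → p j = 0) :
    -((∑ j, p j) * log (∑ j, w j * exp (-c j))) ≤
      ∑ j, (c j * p j + p j * log (p j / ((∑ k, p k) * w j))) := by
  set a := ∑ k, p k
  have ha : 0 ≤ a := sum_nonneg fun j _ => hp j
  have hsupp : ∀ j, p j ≠ 0 → a * w j ≠ 0 := fun j hpj =>
    mul_ne_zero
      (((hp j).lt_of_ne' hpj).trans_le (single_le_sum (fun k _ => hp k) (mem_univ j))).ne'
      fun h => hpj (hpw j h)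
  calc -(a * log (∑ j, w j * exp (-c j)))
      = a * log (a / ∑ j, a * w j * exp (-c j)) := by
        rcases eq_or_ne a 0 with h | h
        · simp [h]
        simp_rw [mul_assoc, ← mul_sum, div_mul_cancel_left₀ h, log_inv, mul_neg]
    _ ≤ ∑ j, p j * log (p j / (a * w j * exp (-c j))) :=
      sum_mul_log_div_sum_le univ (fun j _ => hp j)
        (fun j _ => mul_nonneg (mul_nonneg ha (hw j)) (exp_pos _).le)
        fun j _ h => by_contra fun hpj => hsupp j hpj (by simpa using h)
    _ = ∑ j, (c j * p j + p j * log (p j / (a * w j))) :=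
      sum_congr rfl fun j _ => (mul_add_mul_log_div_eq (hsupp j)).symm

theorem mul_add_mul_log_div_eq_of_eq_posterior {p a v v' c z : ℝ}
    (hp : p = a * (v * exp (-c) / z)) (hsupp : p ≠ 0 → v' ≠ 0) :
    c * p + p * log (p / (a * v')) = p * log (v / v') - p * log z := by
  rcases eq_or_ne p 0 with h | h
  · simp [h]
  have hv' := hsupp h
  rw [hp] at h ⊢
  simp only [ne_eq, mul_eq_zero, div_eq_zero_iff, exp_ne_zero, or_false, not_or] at h
  obtain ⟨ha, hv, hz⟩ := h
  rw [show a * (v * exp (-c) / z) / (a * v') = v / v' * exp (-c) / z by field_simp,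
    log_div (by positivity) hz, log_mul (by positivity) (exp_ne_zero _), log_exp]
  ring

noncomputable section

variable {ι κ : Type*} [Fintype κ]

def mixtureLikelihood (C : ι → κ → ℝ) (w : κ → ℝ) (i : ι) : ℝ :=
  ∑ j, w j * exp (-C i j)

theorem mixtureLikelihood_pos (C : ι → κ → ℝ) {w : κ → ℝ} (hw : w ∈ stdSimplex ℝ κ) (i : ι) :
    0 < mixtureLikelihood C w i := by
  obtain ⟨j, -, hj⟩ : ∃ j ∈ univ, (0 : ℝ) < w j :=
    exists_lt_of_sum_lt (by simp [hw.2])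
  exact sum_pos' (fun k _ => mul_nonneg (hw.1 k) (exp_pos _).le)
    ⟨j, mem_univ j, mul_pos hj (exp_pos _)⟩

def posterior (a : ι → ℝ) (C : ι → κ → ℝ) (w : κ → ℝ) (i : ι) (j : κ) : ℝ :=
  a i * (w j * exp (-C i j) / mixtureLikelihood C w i)

theorem posterior_nonneg {a : ι → ℝ} (ha : ∀ i, 0 ≤ a i) (C : ι → κ → ℝ) {w : κ → ℝ}
    (hw : ∀ j, 0 ≤ w j) (i : ι) (j : κ) : 0 ≤ posterior a C w i j :=
  mul_nonneg (ha i) <| div_nonneg (mul_nonneg (hw j) (exp_pos _).le) <|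
    sum_nonneg fun k _ => mul_nonneg (hw k) (exp_pos _).le

theorem sum_posterior (a : ι → ℝ) (C : ι → κ → ℝ) {w : κ → ℝ} (hw : w ∈ stdSimplex ℝ κ)
    (i : ι) : ∑ j, posterior a C w i j = a i := by
  simp_rw [posterior, ← mul_sum, ← sum_div]
  change a i * (mixtureLikelihood C w i / _) = _
  rw [div_self (mixtureLikelihood_pos C hw i).ne', mul_one]

variable [Fintype ι]

def mixtureNLL (a : ι → ℝ) (C : ι → κ → ℝ) (w : κ → ℝ) : ℝ :=
  -∑ i, a i * log (mixtureLikelihood C w i)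

def IsCoupling (a : ι → ℝ) (b : κ → ℝ) (P : ι → κ → ℝ) : Prop :=
  (∀ i j, 0 ≤ P i j) ∧ (∀ i, ∑ j, P i j = a i) ∧ (∀ j, ∑ i, P i j = b j)

/-- `⟨C, P⟩ + KL(P | a bᵀ)`. On couplings of `a` and `b`, `P i j ≠ 0` forces `a i * b j ≠ 0`,
so the junk value `log (x / 0) = 0` never enters. -/
def entropicCost (a : ι → ℝ) (C : ι → κ → ℝ) (b : κ → ℝ) (P : ι → κ → ℝ) : ℝ :=
  (∑ i, ∑ j, C i j * P i j) + ∑ i, ∑ j, P i j * log (P i j / (a i * b j))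

theorem mixtureNLL_le_entropicCost {a : ι → ℝ} {w : κ → ℝ} {P : ι → κ → ℝ}
    (C : ι → κ → ℝ) (hP : IsCoupling a w P) : mixtureNLL a C w ≤ entropicCost a C w P := by
  obtain ⟨hP0, hrow, hcol⟩ := hP
  have hw : ∀ j, 0 ≤ w j := fun j => hcol j ▸ sum_nonneg fun i _ => hP0 i j
  have hPw : ∀ i j, w j = 0 → P i j = 0 := fun i j h =>
    (sum_eq_zero_iff_of_nonneg fun i _ => hP0 i j).1 ((hcol j).trans h) i (mem_univ i)
  calc mixtureNLL a C w = ∑ i, -(a i * log (mixtureLikelihood C w i)) := by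
        rw [mixtureNLL, sum_neg_distrib]
    _ ≤ ∑ i, ∑ j, (C i j * P i j + P i j * log (P i j / (a i * w j))) :=
      sum_le_sum fun i _ => by
        simpa only [hrow i, mixtureLikelihood] using
          neg_mul_log_sum_mul_exp_le (C i) w (P i) hw (hP0 i) (hPw i)
    _ = entropicCost a C w P := by simp only [entropicCost, ← sum_add_distrib]

def emUpdate (a : ι → ℝ) (C : ι → κ → ℝ) (w : κ → ℝ) (j : κ) : ℝ :=
  ∑ i, posterior a C w i j

theorem isCoupling_posterior {a : ι → ℝ} (ha : ∀ i, 0 ≤ a i) (C : ι → κ → ℝ) {w : κ → ℝ}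
    (hw : w ∈ stdSimplex ℝ κ) : IsCoupling a (emUpdate a C w) (posterior a C w) :=
  ⟨posterior_nonneg ha C hw.1, sum_posterior a C hw, fun _ => rfl⟩

theorem emUpdate_mem_stdSimplex {a : ι → ℝ} (ha : a ∈ stdSimplex ℝ ι) (C : ι → κ → ℝ)
    {w : κ → ℝ} (hw : w ∈ stdSimplex ℝ κ) : emUpdate a C w ∈ stdSimplex ℝ κ := by
  refine ⟨fun j => sum_nonneg fun i _ => posterior_nonneg ha.1 C hw.1 i j, ?_⟩
  simp_rw [emUpdate]
  rw [sum_comm]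
  simp_rw [sum_posterior a C hw, ha.2]

theorem emUpdate_eq_zero {a : ι → ℝ} (C : ι → κ → ℝ) {w : κ → ℝ} {j : κ} (h : w j = 0) :
    emUpdate a C w j = 0 := by
  simp [emUpdate, posterior, h]

theorem entropicCost_posterior {a : ι → ℝ} (ha : ∀ i, 0 ≤ a i) (C : ι → κ → ℝ)
    {w : κ → ℝ} (hw : w ∈ stdSimplex ℝ κ) :
    entropicCost a C (emUpdate a C w) (posterior a C w) =
      mixtureNLL a C w - ∑ j, emUpdate a C w j * log (emUpdate a C w j / w j) := by
  set P := posterior a C w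
  set w' := emUpdate a C w
  have hPw' : ∀ i j, P i j ≠ 0 → w' j ≠ 0 := fun i j h =>
    (((posterior_nonneg ha C hw.1 i j).lt_of_ne' h).trans_le
      (single_le_sum (fun k _ => posterior_nonneg ha C hw.1 k j) (mem_univ i))).ne'
  calc entropicCost a C w' P
      = ∑ i, ∑ j, (P i j * log (w j / w' j) - P i j * log (mixtureLikelihood C w i)) := by
        simp only [entropicCost, ← sum_add_distrib]
        exact sum_congr rfl fun i _ => sum_congr rfl fun j _ =>
          mul_add_mul_log_div_eq_of_eq_posterior rfl (hPw' i j)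
    _ = ∑ j, w' j * log (w j / w' j) - ∑ i, a i * log (mixtureLikelihood C w i) := by
        simp only [sum_sub_distrib]
        rw [sum_comm]
        simp only [← sum_mul, P, sum_posterior a C hw]
        rfl
    _ = mixtureNLL a C w - ∑ j, w' j * log (w' j / w j) := by
        simp only [mixtureNLL, ← inv_div (w' _), log_inv, mul_neg, sum_neg_distrib]
        ring

theorem exists_entropicCost_le_mixtureNLL {a : ι → ℝ} (ha : a ∈ stdSimplex ℝ ι)
    (C : ι → κ → ℝ) {w : κ → ℝ} (hw : w ∈ stdSimplex ℝ κ) :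
    ∃ w' ∈ stdSimplex ℝ κ, ∃ P, IsCoupling a w' P ∧
      entropicCost a C w' P ≤ mixtureNLL a C w := by
  have hw' := emUpdate_mem_stdSimplex ha C hw
  refine ⟨_, hw', _, isCoupling_posterior ha.1 C hw, ?_⟩
  rw [entropicCost_posterior ha.1 C hw, sub_le_self_iff]
  exact sum_mul_log_div_nonneg hw' hw fun j => emUpdate_eq_zero C

end

theorem min_nll_eq_min_eot_general (n K : ℕ) (hn : 0 < n)
    (C : Fin n → Fin K → ℝ) :
    sInf {x : ℝ | ∃ w : Fin K → ℝ, (∀ j, 0 ≤ w j) ∧ (∑ j, w j = 1) ∧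
        x = (1 / n) * (-∑ i, Real.log (∑ j, w j * Real.exp (-C i j)))} =
    sInf {x : ℝ | ∃ w : Fin K → ℝ, ∃ P : Fin n → Fin K → ℝ,
        (∀ j, 0 ≤ w j) ∧ (∑ j, w j = 1) ∧
        (∀ i j, 0 ≤ P i j) ∧ (∀ i, ∑ j, P i j = 1 / n) ∧ (∀ j, ∑ i, P i j = w j) ∧
        x = (∑ i, ∑ j, C i j * P i j) +
            ∑ i, ∑ j, P i j * Real.log (P i j / ((1 / n) * w j))} := by
  have ha : (fun _ : Fin n => (1 / n : ℝ)) ∈ stdSimplex ℝ (Fin n) :=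
    ⟨fun _ => by positivity, by simp [hn.ne']⟩
  have hnll : ∀ w, (1 / n : ℝ) * (-∑ i, log (∑ j, w j * exp (-C i j))) =
      mixtureNLL (fun _ => (1 / n : ℝ)) C w := fun w => by
    simp only [mixtureNLL, mixtureLikelihood, mul_neg, mul_sum]
  apply csInf_eq_csInf_of_forall_exists_le
  · rintro x ⟨w, hw0, hw1, rfl⟩
    obtain ⟨w', hw', P, ⟨hP0, hrow, hcol⟩, hle⟩ :=
      exists_entropicCost_le_mixtureNLL ha C ⟨hw0, hw1⟩
    exact ⟨_, ⟨w', P, hw'.1, hw'.2, hP0, hrow, hcol, rfl⟩, (hnll w).symm ▸ hle⟩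
  · rintro x ⟨w, P, hw0, hw1, hP0, hrow, hcol, rfl⟩
    exact ⟨_, ⟨w, hw0, hw1, rfl⟩,
      (hnll w).symm ▸ mixtureNLL_le_entropicCost C ⟨hP0, hrow, hcol⟩⟩

/-- Maximum-likelihood estimation of the mixture weights is equivalent to
minimizing entropic OT over the second marginal. -/
theorem min_nll_eq_min_eot (n K : ℕ) (hn : 0 < n) (hK : 0 < K)
    (C : Fin n → Fin K → ℝ) :
    sInf {x : ℝ | ∃ w : Fin K → ℝ, (∀ j, 0 ≤ w j) ∧ (∑ j, w j = 1) ∧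
        x = (1 / n) * (-∑ i, Real.log (∑ j, w j * Real.exp (-C i j)))} =
    sInf {x : ℝ | ∃ w : Fin K → ℝ, ∃ P : Fin n → Fin K → ℝ,
        (∀ j, 0 ≤ w j) ∧ (∑ j, w j = 1) ∧
        (∀ i j, 0 ≤ P i j) ∧ (∀ i, ∑ j, P i j = 1 / n) ∧ (∀ j, ∑ i, P i j = w j) ∧
        x = (∑ i, ∑ j, C i j * P i j) +
            ∑ i, ∑ j, P i j * Real.log (P i j / ((1 / n) * w j))} :=
  min_nll_eq_min_eot_general n K hn C
end

section
/- Let C ∈ ℝ^{n×K} and π ∈ Δ_K with positive entries. Then the semi-relaxed entropic OT value min_{P ∈ U_K((1/n)1_n)} ⟨C,P⟩ + KL(P | (1/n)1_n πᵀ) equals −(1/n)∑_{i=1}^n log(∑_{j=1}^K π_j exp(−C_{ij})) and is attained; moreover this value is less than or equal to OT₁((1/n)1_n, π, C) with equality if and only if the column sums of the optimal semi-relaxed plan equal π. -/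
open Real

private lemma gibbs_le (x y : ℝ) (hx : 0 ≤ x) (hy : 0 < y) :
    x - y ≤ x * Real.log (x / y) := by
  rcases eq_or_lt_of_le hx with h | h
  · simp [← h]; linarith
  · have h1 : Real.log (y / x) ≤ y / x - 1 := Real.log_le_sub_one_of_pos (by positivity)
    have h2 : x * Real.log (y / x) ≤ y - x := by
      calc x * Real.log (y/x) ≤ x * (y/x - 1) := mul_le_mul_of_nonneg_left h1 h.le
        _ = y - x := by field_simp
    have h3 : Real.log (x / y) = - Real.log (y / x) := by
      rw [← Real.log_inv]; congr 1; field_simp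
    rw [h3]; nlinarith

private lemma gibbs_eq (x y : ℝ) (hx : 0 ≤ x) (hy : 0 < y)
    (h : x * Real.log (x / y) ≤ x - y) : x = y := by
  by_contra hne
  rcases eq_or_lt_of_le hx with h0 | h0
  · rw [← h0] at h; simp at h; linarith
  · have hxy : y / x ≠ 1 := by
      intro hh
      apply hne
      field_simp at hh
      linarith
    have h1 : Real.log (y / x) < y / x - 1 := Real.log_lt_sub_one_of_pos (by positivity) hxy
    have h2 : x * Real.log (y / x) < y - x := by
      calc x * Real.log (y/x) < x * (y/x - 1) := (mul_lt_mul_iff_right₀ h0).mpr h1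
        _ = y - x := by field_simp
    have h3 : Real.log (x / y) = - Real.log (y / x) := by
      rw [← Real.log_inv]; congr 1; field_simp
    rw [h3] at h; nlinarith

/-- The semi-relaxed entropic OT value equals the scaled negative
log-likelihood and is attained; moreover it lower bounds the entropic OT value
`OT₁((1/n)1_n, w, C)`, with equality iff the column sums of the optimal
semi-relaxed plan equal `w`. -/
theorem semi_relaxed_value_and_comparison (n K : ℕ) (hn : 0 < n) (hK : 0 < K)
    (C : Fin n → Fin K → ℝ) (w : Fin K → ℝ)
    (hwpos : ∀ j, 0 < w j) (hwsum : ∑ j, w j = 1) :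
    let v : ℝ := -(1 / n) * ∑ i, Real.log (∑ j, w j * Real.exp (-C i j))
    let Pstar : Fin n → Fin K → ℝ :=
      fun i j => (1 / n) * (w j * Real.exp (-C i j) / ∑ k, w k * Real.exp (-C i k))
    let Scpl : Set ℝ := {x : ℝ | ∃ P : Fin n → Fin K → ℝ,
      (∀ i j, 0 ≤ P i j) ∧ (∀ i, ∑ j, P i j = 1 / n) ∧ (∀ j, ∑ i, P i j = w j) ∧
      x = (∑ i, ∑ j, C i j * P i j) +
          ∑ i, ∑ j, P i j * Real.log (P i j / ((1 / n) * w j))}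
    IsLeast
      {x : ℝ | ∃ P : Fin n → Fin K → ℝ,
        (∀ i j, 0 ≤ P i j) ∧ (∀ i, ∑ j, P i j = 1 / n) ∧
        x = (∑ i, ∑ j, C i j * P i j) +
            ∑ i, ∑ j, P i j * Real.log (P i j / ((1 / n) * w j))} v ∧
    (∀ x ∈ Scpl, v ≤ x) ∧
    (v = sInf Scpl ↔ ∀ j, ∑ i, Pstar i j = w j) := by
  intro v Pstar Scpl
  classical
  haveI : Nonempty (Fin K) := Fin.pos_iff_nonempty.mp hK
  have hn' : (0:ℝ) < n := by exact_mod_cast hn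
  have hZ : ∀ i, (0:ℝ) < ∑ k, w k * Real.exp (-C i k) :=
    fun i => Finset.sum_pos (fun k _ => mul_pos (hwpos k) (Real.exp_pos _))
      Finset.univ_nonempty
  have ha : ∀ j, (0:ℝ) < (1 / n) * w j := fun j => mul_pos (by positivity) (hwpos j)
  have hPpos : ∀ i j, 0 < Pstar i j := fun i j =>
    mul_pos (by positivity) (div_pos (mul_pos (hwpos j) (Real.exp_pos _)) (hZ i))
  have hProw : ∀ i, ∑ j, Pstar i j = 1 / (n:ℝ) := by
    intro i
    show ∑ j, (1 / (n:ℝ)) * (w j * Real.exp (-C i j) / ∑ k, w k * Real.exp (-C i k)) = 1 / n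
    rw [← Finset.mul_sum, ← Finset.sum_div, div_self (hZ i).ne', mul_one]
  -- entrywise identity
  have hentry : ∀ (i : Fin n) (j : Fin K) (x : ℝ), 0 ≤ x →
      C i j * x + x * Real.log (x / ((1/(n:ℝ)) * w j))
        = x * Real.log (x / Pstar i j) - x * Real.log (∑ k, w k * Real.exp (-C i k)) := by
    intro i j x hx
    rcases eq_or_lt_of_le hx with h0 | h0
    · simp [← h0]
    · have hlogP : Real.log (Pstar i j)
          = Real.log ((1/(n:ℝ)) * w j) + (-C i j) - Real.log (∑ k, w k * Real.exp (-C i k)) := by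
        have hP : Pstar i j
            = ((1/(n:ℝ)) * w j) * Real.exp (-C i j) / (∑ k, w k * Real.exp (-C i k)) := by
          show (1 / (n:ℝ)) * (w j * Real.exp (-C i j) / ∑ k, w k * Real.exp (-C i k)) = _
          ring
        rw [hP, Real.log_div (mul_pos (ha j) (Real.exp_pos _)).ne' (hZ i).ne',
          Real.log_mul (ha j).ne' (Real.exp_ne_zero _), Real.log_exp]
      rw [Real.log_div h0.ne' (ha j).ne', Real.log_div h0.ne' (hPpos i j).ne', hlogP]
      ring
  -- decomposition of the objective
  have hdecomp : ∀ P : Fin n → Fin K → ℝ, (∀ i j, 0 ≤ P i j) →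
      (∀ i, ∑ j, P i j = 1 / (n:ℝ)) →
      (∑ i, ∑ j, C i j * P i j) + (∑ i, ∑ j, P i j * Real.log (P i j / ((1/(n:ℝ)) * w j)))
        = v + ∑ i, ∑ j, P i j * Real.log (P i j / Pstar i j) := by
    intro P h0 hr
    have step1 : (∑ i, ∑ j, C i j * P i j)
        + (∑ i, ∑ j, P i j * Real.log (P i j / ((1/(n:ℝ)) * w j)))
        = ∑ i, ∑ j, (C i j * P i j + P i j * Real.log (P i j / ((1/(n:ℝ)) * w j))) := by
      rw [← Finset.sum_add_distrib]
      exact Finset.sum_congr rfl fun i _ => (Finset.sum_add_distrib).symm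
    rw [step1]
    have step2 : ∀ i ∈ Finset.univ, ∀ j ∈ (Finset.univ : Finset (Fin K)),
        C i j * P i j + P i j * Real.log (P i j / ((1/(n:ℝ)) * w j))
        = P i j * Real.log (P i j / Pstar i j)
          - P i j * Real.log (∑ k, w k * Real.exp (-C i k)) :=
      fun i _ j _ => hentry i j _ (h0 i j)
    rw [Finset.sum_congr rfl (fun i hi => Finset.sum_congr rfl (step2 i hi))]
    have step3 : ∀ i : Fin n,
        ∑ j, (P i j * Real.log (P i j / Pstar i j)
          - P i j * Real.log (∑ k, w k * Real.exp (-C i k)))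
        = (∑ j, P i j * Real.log (P i j / Pstar i j))
          - (1/(n:ℝ)) * Real.log (∑ k, w k * Real.exp (-C i k)) := by
      intro i
      rw [Finset.sum_sub_distrib, ← Finset.sum_mul, hr i]
    rw [Finset.sum_congr rfl (fun i _ => step3 i), Finset.sum_sub_distrib]
    show _ = -(1 / (n:ℝ)) * (∑ i, Real.log (∑ j, w j * Real.exp (-C i j))) + _
    rw [neg_mul, Finset.mul_sum]
    ring
  have hsumdiff : ∀ P : Fin n → Fin K → ℝ, (∀ i, ∑ j, P i j = 1 / (n:ℝ)) →
      ∑ i, ∑ j, (P i j - Pstar i j) = 0 := by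
    intro P hr
    apply Finset.sum_eq_zero
    intro i _
    rw [Finset.sum_sub_distrib, hr i, hProw i, sub_self]
  -- the lower bound
  have hge : ∀ P : Fin n → Fin K → ℝ, (∀ i j, 0 ≤ P i j) →
      (∀ i, ∑ j, P i j = 1 / (n:ℝ)) →
      v ≤ (∑ i, ∑ j, C i j * P i j)
        + (∑ i, ∑ j, P i j * Real.log (P i j / ((1/(n:ℝ)) * w j))) := by
    intro P h0 hr
    rw [hdecomp P h0 hr]
    have hb : ∑ i, ∑ j, (P i j - Pstar i j)
        ≤ ∑ i, ∑ j, P i j * Real.log (P i j / Pstar i j) :=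
      Finset.sum_le_sum fun i _ => Finset.sum_le_sum fun j _ =>
        gibbs_le _ _ (h0 i j) (hPpos i j)
    have hz := hsumdiff P hr
    linarith
  -- equality case
  have heqcase : ∀ P : Fin n → Fin K → ℝ, (∀ i j, 0 ≤ P i j) →
      (∀ i, ∑ j, P i j = 1 / (n:ℝ)) →
      (∑ i, ∑ j, C i j * P i j)
        + (∑ i, ∑ j, P i j * Real.log (P i j / ((1/(n:ℝ)) * w j))) = v →
      ∀ i j, P i j = Pstar i j := by
    intro P h0 hr hfeq
    have hsum0 : ∑ i, ∑ j, P i j * Real.log (P i j / Pstar i j) = 0 := by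
      have := hdecomp P h0 hr
      rw [hfeq] at this
      linarith
    have hz := hsumdiff P hr
    have hkey : ∑ i, ∑ j,
        (P i j * Real.log (P i j / Pstar i j) - (P i j - Pstar i j)) = 0 := by
      simp only [Finset.sum_sub_distrib]
      rw [show (∑ i, ∑ j, P i j * Real.log (P i j / Pstar i j)) = 0 from hsum0]
      have : ∑ i, ∑ j, (P i j - Pstar i j) = 0 := hz
      simp only [Finset.sum_sub_distrib] at this
      linarith
    have h1 := (Finset.sum_eq_zero_iff_of_nonneg (fun i _ =>
      Finset.sum_nonneg fun j _ =>
        sub_nonneg.mpr (gibbs_le _ _ (h0 i j) (hPpos i j)))).mp hkey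
    intro i j
    have h2 := (Finset.sum_eq_zero_iff_of_nonneg (fun j _ =>
      sub_nonneg.mpr (gibbs_le _ _ (h0 i j) (hPpos i j)))).mp
        (h1 i (Finset.mem_univ i)) j (Finset.mem_univ j)
    exact gibbs_eq _ _ (h0 i j) (hPpos i j) (le_of_eq (sub_eq_zero.mp h2))
  -- value at Pstar
  have hfPstar : (∑ i, ∑ j, C i j * Pstar i j)
      + (∑ i, ∑ j, Pstar i j * Real.log (Pstar i j / ((1/(n:ℝ)) * w j))) = v := by
    rw [hdecomp Pstar (fun i j => (hPpos i j).le) hProw]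
    have : ∑ i, ∑ j, Pstar i j * Real.log (Pstar i j / Pstar i j) = 0 :=
      Finset.sum_eq_zero fun i _ => Finset.sum_eq_zero fun j _ => by
        rw [div_self (hPpos i j).ne', Real.log_one, mul_zero]
    rw [this, add_zero]
  have hvleS : ∀ x ∈ Scpl, v ≤ x := by
    rintro x ⟨P, h0, hr, _, rfl⟩
    exact hge P h0 hr
  refine ⟨⟨⟨Pstar, fun i j => (hPpos i j).le, hProw, hfPstar.symm⟩, ?_⟩, hvleS, ?_, ?_⟩
  · rintro x ⟨P, h0, hr, rfl⟩
    exact hge P h0 hr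
  · -- forward direction: v = sInf Scpl → column sums of Pstar equal w
    intro hv
    set U : Set (Fin n → Fin K → ℝ) :=
      {P | (∀ i j, 0 ≤ P i j) ∧ (∀ i, ∑ j, P i j = 1 / (n:ℝ)) ∧ (∀ j, ∑ i, P i j = w j)}
      with hUdef
    have heval : ∀ (i : Fin n) (j : Fin K),
        Continuous (fun P : Fin n → Fin K → ℝ => P i j) :=
      fun i j => (continuous_apply j).comp (continuous_apply i)
    set G : (Fin n → Fin K → ℝ) → ℝ := fun P => ∑ i, ∑ j,
        (C i j * P i j + (P i j * Real.log (P i j) - P i j * Real.log ((1/(n:ℝ)) * w j)))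
      with hGdef
    have hGcont : Continuous G := by
      apply continuous_finset_sum
      intro i _
      apply continuous_finset_sum
      intro j _
      exact (continuous_const.mul (heval i j)).add
        ((Real.continuous_mul_log.comp (heval i j)).sub ((heval i j).mul continuous_const))
    have hGf : ∀ P : Fin n → Fin K → ℝ, (∀ i j, 0 ≤ P i j) →
        G P = (∑ i, ∑ j, C i j * P i j)
          + ∑ i, ∑ j, P i j * Real.log (P i j / ((1/(n:ℝ)) * w j)) := by
      intro P h0
      have hterm : ∀ i j, C i j * P i j
          + (P i j * Real.log (P i j) - P i j * Real.log ((1/(n:ℝ)) * w j))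
          = C i j * P i j + P i j * Real.log (P i j / ((1/(n:ℝ)) * w j)) := by
        intro i j
        rcases eq_or_lt_of_le (h0 i j) with h | h
        · simp [← h]
        · rw [Real.log_div h.ne' (ha j).ne']
          ring
      calc G P = ∑ i, ∑ j,
            (C i j * P i j + P i j * Real.log (P i j / ((1/(n:ℝ)) * w j))) :=
          Finset.sum_congr rfl fun i _ => Finset.sum_congr rfl fun j _ => hterm i j
        _ = _ := by
          rw [← Finset.sum_add_distrib]
          exact Finset.sum_congr rfl fun i _ => Finset.sum_add_distrib
    have hUsub : U ⊆ Set.Icc (fun _ _ => (0:ℝ)) (fun _ _ => 1/(n:ℝ)) := by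
      rintro P ⟨h0, hr, _⟩
      refine ⟨fun i j => h0 i j, fun i j => ?_⟩
      calc P i j ≤ ∑ j', P i j' :=
            Finset.single_le_sum (fun k _ => h0 i k) (Finset.mem_univ j)
        _ = 1/(n:ℝ) := hr i
    have hUclosed : IsClosed U := by
      have hrep : U = (⋂ (i) (j), {P : Fin n → Fin K → ℝ | 0 ≤ P i j})
          ∩ ((⋂ i, {P : Fin n → Fin K → ℝ | ∑ j, P i j = 1/(n:ℝ)})
            ∩ (⋂ j, {P : Fin n → Fin K → ℝ | ∑ i, P i j = w j})) := by
        ext P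
        simp only [hUdef, Set.mem_setOf_eq, Set.mem_inter_iff, Set.mem_iInter]
      rw [hrep]
      refine IsClosed.inter ?_ (IsClosed.inter ?_ ?_)
      · exact isClosed_iInter fun i => isClosed_iInter fun j =>
          isClosed_le continuous_const (heval i j)
      · exact isClosed_iInter fun i =>
          isClosed_eq (continuous_finset_sum _ fun j _ => heval i j) continuous_const
      · exact isClosed_iInter fun j =>
          isClosed_eq (continuous_finset_sum _ fun i _ => heval i j) continuous_const
    have hUcomp : IsCompact U :=
      IsCompact.of_isClosed_subset isCompact_Icc hUclosed hUsub
    have hUne : U.Nonempty := by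
      refine ⟨fun i j => (1/(n:ℝ)) * w j, fun i j => (ha j).le, fun i => ?_, fun j => ?_⟩
      · rw [← Finset.mul_sum, hwsum, mul_one]
      · rw [Finset.sum_const, Finset.card_univ, Fintype.card_fin, nsmul_eq_mul]
        field_simp
    obtain ⟨P0, hP0U, hP0min⟩ := hUcomp.exists_isMinOn hUne hGcont.continuousOn
    obtain ⟨h00, h0r, h0c⟩ := hP0U
    have hP0Scpl : G P0 ∈ Scpl := ⟨P0, h00, h0r, h0c, hGf P0 h00⟩
    have hlbS : ∀ x ∈ Scpl, G P0 ≤ x := by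
      rintro x ⟨P, hp0, hpr, hpc, rfl⟩
      have hmem : P ∈ U := ⟨hp0, hpr, hpc⟩
      have := isMinOn_iff.mp hP0min P hmem
      rwa [hGf P hp0] at this
    have hval : G P0 = v := by
      rw [hv]
      exact le_antisymm (le_csInf ⟨G P0, hP0Scpl⟩ hlbS) (csInf_le ⟨v, hvleS⟩ hP0Scpl)
    have hP0eq : ∀ i j, P0 i j = Pstar i j :=
      heqcase P0 h00 h0r ((hGf P0 h00).symm.trans hval)
    intro j
    rw [← h0c j]
    exact Finset.sum_congr rfl fun i _ => (hP0eq i j).symm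
  · -- reverse direction
    intro hcol
    have hmem : v ∈ Scpl := ⟨Pstar, fun i j => (hPpos i j).le, hProw, hcol, hfPstar.symm⟩
    exact le_antisymm (le_csInf ⟨v, hmem⟩ hvleS) (csInf_le ⟨v, hvleS⟩ hmem)
end
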